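/- Let I ⊂ S be a homogeneous ideal and ω a weight vector on S such that in_ω(I) is a monomial ideal. Let φ_d*ω be the weight vector on R^[d] assigning to x_a the weight ω·a. Then in_{φ_d*ω}(φ_d^{-1}(I)) = φ_d^{-1}(in_ω(I)). -/

import Mathlib

open MvPolynomial

/-- A term order on monomials (exponent vectors) of `MvPolynomial σ K`. -/
structure TermOrder (σ : Type*) where
  lo : LinearOrder (σ →₀ ℕ)
  zero_le : ∀ a : σ →₀ ℕ, lo.le 0 a
  add_lt : ∀ a b c : σ →₀ ℕ, lo.lt a b → lo.lt (a + c) (b + c)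

/-- The exponent vector of the initial (leading) term of `f`. -/
noncomputable def TermOrder.lead {σ K : Type*} [Field K]
    (t : TermOrder σ) (f : MvPolynomial σ K) : σ →₀ ℕ :=
  letI := t.lo
  WithBot.unbotD 0 f.support.max

/-- The initial ideal of `I` w.r.t. the term order `t`. -/
noncomputable def initialIdeal {σ K : Type*} [Field K]
    (t : TermOrder σ) (I : Ideal (MvPolynomial σ K)) : Ideal (MvPolynomial σ K) :=
  Ideal.span { m : MvPolynomial σ K | ∃ f ∈ I, f ≠ 0 ∧ m = monomial (t.lead f) (1 : K) }

/-- `G` is a Gröbner basis of `I` w.r.t. `t`. -/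
def IsGB {σ K : Type*} [Field K] (t : TermOrder σ)
    (I : Ideal (MvPolynomial σ K)) (G : Set (MvPolynomial σ K)) : Prop :=
  G ⊆ (I : Set (MvPolynomial σ K)) ∧
    initialIdeal t I = Ideal.span ((fun g => monomial (t.lead g) (1 : K)) '' G)

/-- Total degree of an exponent vector. -/
def Fdeg {σ : Type*} (m : σ →₀ ℕ) : ℕ := m.sum fun _ n => n

/-- `t` is a reverse lexicographic order w.r.t. the strict variable order `vlt`. -/
def IsRevLex {σ : Type*} (vlt : σ → σ → Prop) (t : TermOrder σ) : Prop :=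
  ∀ α β : σ →₀ ℕ, t.lo.lt α β ↔
    Fdeg α < Fdeg β ∨
      (Fdeg α = Fdeg β ∧ ∃ j, β j < α j ∧ ∀ k, vlt k j → α k = β k)

/-- Variables of `R^[d]`: exponent vectors of degree `d` monomials of `K[y_1,…,y_s]`. -/
abbrev Vd (s d : ℕ) := {a : Fin s → ℕ // ∑ i, a i = d}

/-- The map `φ_d : R^[d] → S`, `x_a ↦ y^a`. -/
noncomputable def phi (K : Type*) [Field K] (s d : ℕ) :
    MvPolynomial (Vd s d) K →ₐ[K] MvPolynomial (Fin s) K :=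
  aeval fun a : Vd s d => ∏ i, X i ^ a.1 i

/-- Lexicographic strict order on `Fin s → ℕ`. -/
def lexLt {s : ℕ} (a b : Fin s → ℕ) : Prop :=
  ∃ j, (∀ i, i < j → a i = b i) ∧ a j < b j

/-- `Γ(a)`: the nondecreasing rearrangement of `a`. -/
noncomputable def Gam {s : ℕ} (a : Fin s → ℕ) : Fin s → ℕ := a ∘ Tuple.sort a

/-- The order on the variables of `R^[d]` : `x_a ≺_Γ x_b` iff `Γ(b) <lex Γ(a)`,
or `Γ(b) = Γ(a)` and `b <lex a`. -/
def varGammaLt {s : ℕ} (a b : Fin s → ℕ) : Prop :=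
  lexLt (Gam b) (Gam a) ∨ (Gam b = Gam a ∧ lexLt b a)

/-- `v` is `mv_{≺_Γ}(u)`: the `≺_Γ`-smallest variable `x_c` with `y^c ∣ φ_d(u)`. -/
def IsMvGamma {K : Type*} [Field K] {s d : ℕ} (u : Vd s d →₀ ℕ) (v : Vd s d) : Prop :=
  (∏ i, (X i : MvPolynomial (Fin s) K) ^ v.1 i) ∣ phi K s d (monomial u 1) ∧
    ∀ c : Vd s d, (∏ i, (X i : MvPolynomial (Fin s) K) ^ c.1 i) ∣ phi K s d (monomial u 1) →
      v = c ∨ varGammaLt v.1 c.1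

/-- Weight of an exponent vector w.r.t. a weight function on the variables. -/
def wdeg {σ : Type*} (w : σ → ℕ) (m : σ →₀ ℕ) : ℕ := m.sum fun i n => w i * n

/-- Initial form of `f` w.r.t. a weight vector `w`: the sum of the terms of `f` of
highest `w`-weight. -/
noncomputable def inW {σ K : Type*} [Field K] (w : σ → ℕ) (f : MvPolynomial σ K) :
    MvPolynomial σ K :=
  ∑ m ∈ f.support.filter (fun m => ∀ m' ∈ f.support, wdeg w m' ≤ wdeg w m),
    monomial m (MvPolynomial.coeff m f)

/-- Initial ideal of `I` w.r.t. a weight vector `w`. -/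
noncomputable def inWIdeal {σ K : Type*} [Field K] (w : σ → ℕ)
    (I : Ideal (MvPolynomial σ K)) : Ideal (MvPolynomial σ K) :=
  Ideal.span { g | ∃ f ∈ I, g = inW w f }

section Stmt15Aux

/-! ### Auxiliary lemmas -/

lemma wdeg_add' {σ : Type*} (w : σ → ℕ) (a b : σ →₀ ℕ) :
    wdeg w (a + b) = wdeg w a + wdeg w b := by
  unfold wdeg; exact Finsupp.sum_add_index' (by simp) (by intros; ring)

lemma Fdeg_add' {σ : Type*} (a b : σ →₀ ℕ) : Fdeg (a + b) = Fdeg a + Fdeg b := by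
  unfold Fdeg; exact Finsupp.sum_add_index' (by simp) (by intros; ring)

lemma wdeg_zero' {σ : Type*} (w : σ → ℕ) : wdeg w 0 = 0 := by unfold wdeg; simp

lemma Fdeg_zero' {σ : Type*} : Fdeg (0 : σ →₀ ℕ) = 0 := by unfold Fdeg; simp

lemma wdeg_single' {σ : Type*} (w : σ → ℕ) (i : σ) (k : ℕ) :
    wdeg w (Finsupp.single i k) = w i * k := by
  unfold wdeg; exact Finsupp.sum_single_index (by simp)

lemma Fdeg_single' {σ : Type*} (i : σ) (k : ℕ) : Fdeg (Finsupp.single i k) = k := by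
  unfold Fdeg; exact Finsupp.sum_single_index rfl

lemma wdeg_tsub' {σ : Type*} (w : σ → ℕ) {a b : σ →₀ ℕ} (h : a ≤ b) :
    wdeg w b = wdeg w a + wdeg w (b - a) := by
  conv_lhs => rw [← tsub_add_cancel_of_le h]
  rw [wdeg_add']; ring

lemma Fdeg_eq_zero' {σ : Type*} {m : σ →₀ ℕ} (h : Fdeg m = 0) : m = 0 := by
  ext i
  simp only [Finsupp.coe_zero, Pi.zero_apply]
  by_contra hi
  have hmem : i ∈ m.support := Finsupp.mem_support_iff.mpr hi
  rw [Fdeg, Finsupp.sum] at h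
  have : m i ≤ ∑ j ∈ m.support, m j := Finset.single_le_sum (fun j _ => Nat.zero_le _) hmem
  omega

lemma wdeg_smul' {σ : Type*} (w : σ → ℕ) (k : ℕ) (a : σ →₀ ℕ) :
    wdeg w (k • a) = k * wdeg w a := by
  induction k with
  | zero => simp [wdeg_zero']
  | succ n ih => rw [succ_nsmul, wdeg_add', ih]; ring

lemma Fdeg_smul' {σ : Type*} (k : ℕ) (a : σ →₀ ℕ) : Fdeg (k • a) = k * Fdeg a := by
  induction k with
  | zero => simp [Fdeg_zero']
  | succ n ih => rw [succ_nsmul, Fdeg_add', ih]; ring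

/-! ### Selection of coefficients -/

open Classical in
/-- The part of `f` supported on exponents satisfying `P`. -/
noncomputable def sel {σ K : Type*} [Field K] (P : (σ →₀ ℕ) → Prop) (f : MvPolynomial σ K) :
    MvPolynomial σ K :=
  ∑ m ∈ f.support.filter P, monomial m (MvPolynomial.coeff m f)

open Classical in
lemma coeff_finsum {σ K : Type*} [Field K] (t : Finset (σ →₀ ℕ)) (c : (σ →₀ ℕ) → K)
    (m : σ →₀ ℕ) :
    coeff m (∑ k ∈ t, monomial k (c k)) = if m ∈ t then c m else 0 := by
  rw [coeff_sum]
  simp only [coeff_monomial]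
  rw [Finset.sum_ite_eq' t m c]

open Classical in
lemma coeff_sel {σ K : Type*} [Field K] (P : (σ →₀ ℕ) → Prop) (f : MvPolynomial σ K)
    (m : σ →₀ ℕ) :
    coeff m (sel P f) = if P m then coeff m f else 0 := by
  rw [sel, coeff_finsum]
  by_cases hP : P m <;> by_cases hm : m ∈ f.support <;>
    simp_all [Finset.mem_filter, MvPolynomial.notMem_support_iff]

lemma support_sel {σ K : Type*} [Field K] {P : (σ →₀ ℕ) → Prop} {f : MvPolynomial σ K}
    {m : σ →₀ ℕ} (hm : m ∈ (sel P f).support) : m ∈ f.support ∧ P m := by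
  rw [MvPolynomial.mem_support_iff, coeff_sel] at hm
  rw [MvPolynomial.mem_support_iff]
  by_cases hP : P m
  · rw [if_pos hP] at hm; exact ⟨hm, hP⟩
  · rw [if_neg hP] at hm; exact absurd rfl hm

/-- The top weight appearing in `f`. -/
noncomputable def maxw {σ K : Type*} [Field K] (w : σ → ℕ) (f : MvPolynomial σ K) : ℕ :=
  f.support.sup (wdeg w)

open Classical in
lemma coeff_inW {σ K : Type*} [Field K] (w : σ → ℕ) (f : MvPolynomial σ K) (m : σ →₀ ℕ) :
    coeff m (inW w f) = if wdeg w m = maxw w f then coeff m f else 0 := by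
  have hfe : (f.support.filter (fun m => ∀ m' ∈ f.support, wdeg w m' ≤ wdeg w m))
      = f.support.filter (fun m => wdeg w m = maxw w f) := by
    apply Finset.filter_congr
    intro m hm
    constructor
    · intro h
      exact le_antisymm (Finset.le_sup hm) (Finset.sup_le h)
    · intro h m' hm'
      rw [h]; exact Finset.le_sup hm'
  rw [inW, hfe, coeff_finsum]
  by_cases hP : wdeg w m = maxw w f <;> by_cases hm : m ∈ f.support <;>
    simp_all [Finset.mem_filter, MvPolynomial.notMem_support_iff]

lemma inW_eq_sel {σ K : Type*} [Field K] (w : σ → ℕ) (f : MvPolynomial σ K) :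
    inW w f = sel (fun m => wdeg w m = maxw w f) f := by
  ext m; rw [coeff_inW, coeff_sel]
  by_cases h : wdeg w m = maxw w f <;> simp [h]

lemma inW_of_weight_eq {σ K : Type*} [Field K] {w : σ → ℕ} {W : ℕ} {f : MvPolynomial σ K}
    (h : ∀ m ∈ f.support, wdeg w m = W) : inW w f = f := by
  rw [inW]
  have hfil : f.support.filter (fun m => ∀ m' ∈ f.support, wdeg w m' ≤ wdeg w m)
      = f.support := by
    apply Finset.filter_true_of_mem
    intro m hm m' hm'
    rw [h m hm, h m' hm']
  rw [hfil, support_sum_monomial_coeff]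

/-! ### The map `phi` on monomials -/

/-- The exponent vector of the image of the variable `a`. -/
noncomputable def bvec {s d : ℕ} (a : Vd s d) : Fin s →₀ ℕ :=
  Finsupp.equivFunOnFinite.symm a.1

/-- `Amap u` is the exponent vector of `phi (monomial u 1)`. -/
noncomputable def Amap {s d : ℕ} (u : Vd s d →₀ ℕ) : Fin s →₀ ℕ :=
  u.sum fun a k => k • bvec a

lemma Amap_add {s d : ℕ} (u v : Vd s d →₀ ℕ) : Amap (u + v) = Amap u + Amap v := by
  unfold Amap; exact Finsupp.sum_add_index' (by simp) (by intros; rw [add_smul])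

lemma Amap_zero {s d : ℕ} : Amap (0 : Vd s d →₀ ℕ) = 0 := by unfold Amap; simp

lemma Amap_single {s d : ℕ} (a : Vd s d) (k : ℕ) :
    Amap (Finsupp.single a k) = k • bvec a := by
  unfold Amap; exact Finsupp.sum_single_index (by simp)

lemma monomial_one_eq_prod {s : ℕ} {K : Type*} [Field K] (b : Fin s → ℕ) :
    (monomial (Finsupp.equivFunOnFinite.symm b) (1 : K)) = ∏ i, X i ^ b i := by
  rw [monomial_eq, C_1, one_mul, Finsupp.prod_pow]
  rfl

lemma wdeg_bvec {s d : ℕ} (ω : Fin s → ℕ) (a : Vd s d) :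
    wdeg ω (bvec a) = ∑ i, ω i * a.1 i := by
  rw [wdeg, Finsupp.sum_fintype]
  · rfl
  · intro i; ring

lemma Fdeg_bvec {s d : ℕ} (a : Vd s d) : Fdeg (bvec a) = d := by
  rw [Fdeg, Finsupp.sum_fintype]
  · exact a.2
  · intro i; rfl

lemma phi_monomial {K : Type*} [Field K] {s d : ℕ} (u : Vd s d →₀ ℕ) (c : K) :
    phi K s d (monomial u c) = monomial (Amap u) c := by
  rw [phi, aeval_monomial]
  have key : (u.prod fun a k => (∏ i, (X i : MvPolynomial (Fin s) K) ^ a.1 i) ^ k)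
      = monomial (Amap u) 1 := by
    rw [Finsupp.prod, Amap, Finsupp.sum]
    induction u.support using Finset.induction with
    | empty => simp
    | insert _ _ hx ih =>
      rw [Finset.prod_insert hx, Finset.sum_insert hx, ih, ← monomial_one_eq_prod,
        monomial_pow, monomial_mul, one_pow, one_mul]
      rfl
  rw [key, algebraMap_eq, C_mul_monomial, mul_one]

lemma wdeg_Amap {s d : ℕ} (ω : Fin s → ℕ) (u : Vd s d →₀ ℕ) :
    wdeg ω (Amap u) = wdeg (fun v : Vd s d => ∑ i, ω i * v.1 i) u := by
  rw [Amap]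
  induction u using Finsupp.induction with
  | zero => simp [wdeg_zero']
  | single_add a k v ha hk ih =>
    rw [Finsupp.sum_add_index' (by simp) (by intros; rw [add_smul]),
      Finsupp.sum_single_index (by simp), wdeg_add', ih, wdeg_add', wdeg_smul', wdeg_bvec,
      wdeg_single']
    ring_nf

lemma Fdeg_Amap {s d : ℕ} (u : Vd s d →₀ ℕ) : Fdeg (Amap u) = d * Fdeg u := by
  rw [Amap]
  induction u using Finsupp.induction with
  | zero => simp [Fdeg_zero']
  | single_add a k v ha hk ih =>
    rw [Finsupp.sum_add_index' (by simp) (by intros; rw [add_smul]),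
      Finsupp.sum_single_index (by simp), Fdeg_add', ih, Fdeg_add', Fdeg_smul', Fdeg_bvec,
      Fdeg_single']
    ring_nf

lemma phi_eq_sum {K : Type*} [Field K] {s d : ℕ} (f : MvPolynomial (Vd s d) K) :
    phi K s d f = ∑ u ∈ f.support, monomial (Amap u) (coeff u f) := by
  conv_lhs => rw [← support_sum_monomial_coeff f]
  rw [map_sum]
  exact Finset.sum_congr rfl fun u _ => phi_monomial u (coeff u f)

open Classical in
lemma coeff_phi {K : Type*} [Field K] {s d : ℕ} (f : MvPolynomial (Vd s d) K)
    (m : Fin s →₀ ℕ) :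
    coeff m (phi K s d f) = ∑ u ∈ f.support, if Amap u = m then coeff u f else 0 := by
  rw [phi_eq_sum, coeff_sum]
  exact Finset.sum_congr rfl fun u _ => by rw [coeff_monomial]

lemma support_phi {K : Type*} [Field K] {s d : ℕ} (f : MvPolynomial (Vd s d) K)
    (m : Fin s →₀ ℕ) (hm : m ∈ (phi K s d f).support) : ∃ u ∈ f.support, Amap u = m := by
  classical
  rw [mem_support_iff, coeff_phi] at hm
  by_contra hc
  push_neg at hc
  exact hm (Finset.sum_eq_zero fun u hu => if_neg (hc u hu))

lemma phi_sel {K : Type*} [Field K] {s d : ℕ} (P : (Vd s d →₀ ℕ) → Prop)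
    (P' : (Fin s →₀ ℕ) → Prop) (hPP : ∀ u, P u ↔ P' (Amap u))
    (f : MvPolynomial (Vd s d) K) :
    phi K s d (sel P f) = sel P' (phi K s d f) := by
  classical
  ext m
  rw [coeff_phi, coeff_sel]
  have hcoeff : ∀ u, P u → coeff u (sel P f) = coeff u f := by
    intro u hP; rw [coeff_sel, if_pos hP]
  by_cases hP' : P' m
  · rw [if_pos hP', coeff_phi]
    have h1 : (sel P f).support ⊆ f.support := fun u hu => (support_sel hu).1
    rw [Finset.sum_subset h1 (fun u _ hnu => by
      rw [MvPolynomial.notMem_support_iff.mp hnu, ite_self])]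
    refine Finset.sum_congr rfl fun u hu => ?_
    by_cases hAm : Amap u = m
    · rw [if_pos hAm, if_pos hAm, hcoeff u ((hPP u).mpr (hAm ▸ hP'))]
    · rw [if_neg hAm, if_neg hAm]
  · rw [if_neg hP']
    apply Finset.sum_eq_zero
    intro u hu
    have hmem := support_sel hu
    by_cases hAm : Amap u = m
    · exact absurd (hAm ▸ (hPP u).mp hmem.2) hP'
    · exact if_neg hAm

/-! ### Realizing slices of the initial ideal by elements of `I` -/

lemma lemmaE {σ K : Type*} [Field K] (w : σ → ℕ) (I : Ideal (MvPolynomial σ K))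
    {h : MvPolynomial σ K} (hh : h ∈ inWIdeal w I) (W : ℕ) :
    ∃ f ∈ I, (∀ m, W < wdeg w m → coeff m f = 0) ∧
      (∀ m, wdeg w m = W → coeff m f = coeff m h) := by
  rw [inWIdeal] at hh
  induction hh using Submodule.span_induction generalizing W with
  | mem g hg =>
    obtain ⟨f₀, hf₀, rfl⟩ := hg
    by_cases hW : W = maxw w f₀
    · refine ⟨f₀, hf₀, fun m hm => ?_, fun m hm => ?_⟩
      · by_contra hc
        have h2 := Finset.le_sup (f := wdeg w) (mem_support_iff.mpr hc)
        have h3 : wdeg w m ≤ maxw w f₀ := h2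
        omega
      · rw [coeff_inW, if_pos (hW ▸ hm)]
    · refine ⟨0, Ideal.zero_mem I, fun m _ => rfl, fun m hm => ?_⟩
      rw [coeff_zero, coeff_inW, if_neg (by rw [hm]; exact fun hc => hW hc)]
  | zero => exact ⟨0, Ideal.zero_mem I, fun m _ => rfl, fun m _ => by simp⟩
  | add g₁ g₂ _ _ ih₁ ih₂ =>
    obtain ⟨f₁, hf₁, h₁top, h₁eq⟩ := ih₁ W
    obtain ⟨f₂, hf₂, h₂top, h₂eq⟩ := ih₂ W
    exact ⟨f₁ + f₂, Ideal.add_mem I hf₁ hf₂,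
      fun m hm => by rw [coeff_add, h₁top m hm, h₂top m hm, add_zero],
      fun m hm => by rw [coeff_add, coeff_add, h₁eq m hm, h₂eq m hm]⟩
  | smul p g hg ih =>
    rw [smul_eq_mul]
    induction p using MvPolynomial.induction_on' generalizing W with
    | add p q ihp ihq =>
      obtain ⟨f₁, hf₁, h₁top, h₁eq⟩ := ihp W
      obtain ⟨f₂, hf₂, h₂top, h₂eq⟩ := ihq W
      refine ⟨f₁ + f₂, Ideal.add_mem I hf₁ hf₂,
        fun m hm => by rw [coeff_add, h₁top m hm, h₂top m hm, add_zero],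
        fun m hm => ?_⟩
      rw [coeff_add, add_mul, coeff_add, h₁eq m hm, h₂eq m hm]
    | monomial u c =>
      by_cases hu : wdeg w u ≤ W
      · obtain ⟨f₀, hf₀, htop, heq⟩ := ih (W - wdeg w u)
        refine ⟨monomial u c * f₀, Ideal.mul_mem_left I _ hf₀, fun m hm => ?_, fun m hm => ?_⟩
        · rw [coeff_monomial_mul']
          by_cases hle : u ≤ m
          · rw [if_pos hle, htop (m - u) (by have := wdeg_tsub' w hle; omega), mul_zero]
          · rw [if_neg hle]
        · rw [coeff_monomial_mul', coeff_monomial_mul']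
          by_cases hle : u ≤ m
          · rw [if_pos hle, if_pos hle, heq (m - u) (by have := wdeg_tsub' w hle; omega)]
          · rw [if_neg hle, if_neg hle]
      · refine ⟨0, Ideal.zero_mem I, fun m _ => rfl, fun m hm => ?_⟩
        rw [coeff_zero, coeff_monomial_mul']
        by_cases hle : u ≤ m
        · exact absurd (hm ▸ (wdeg_tsub' w hle).symm ▸ Nat.le_add_right _ _) hu
        · rw [if_neg hle]

/-! ### Lifting monomials along `phi` -/

lemma exists_sub_part {s : ℕ} (d : ℕ) : ∀ m : Fin s →₀ ℕ, d ≤ Fdeg m →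
    ∃ b : Fin s →₀ ℕ, Fdeg b = d ∧ b ≤ m := by
  induction d with
  | zero => exact fun m _ => ⟨0, by simp [Fdeg_zero'], zero_le⟩
  | succ n ih =>
    intro m hm
    have hm0 : m ≠ 0 := by
      intro h0
      rw [h0] at hm
      simp [Fdeg] at hm
    obtain ⟨i, hi⟩ : ∃ i, m i ≠ 0 := by
      by_contra hc
      push_neg at hc
      exact hm0 (Finsupp.ext hc)
    have hsingle : Finsupp.single i 1 ≤ m := Finsupp.single_le_iff.mpr (by omega)
    have hdeg : Fdeg (m - Finsupp.single i 1) = Fdeg m - 1 := by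
      have := Fdeg_add' (m - Finsupp.single i 1) (Finsupp.single i 1)
      rw [tsub_add_cancel_of_le hsingle, Fdeg_single'] at this
      omega
    obtain ⟨b', hb'd, hb'le⟩ := ih (m - Finsupp.single i 1) (by omega)
    refine ⟨b' + Finsupp.single i 1, by rw [Fdeg_add', hb'd, Fdeg_single'], ?_⟩
    calc b' + Finsupp.single i 1 ≤ (m - Finsupp.single i 1) + Finsupp.single i 1 :=
          add_le_add_left hb'le _
      _ = m := tsub_add_cancel_of_le hsingle

lemma exists_lift {s d : ℕ} : ∀ (n : ℕ) (m : Fin s →₀ ℕ), Fdeg m = n * d →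
    ∃ u : Vd s d →₀ ℕ, Amap u = m := by
  intro n
  induction n with
  | zero =>
    intro m hm
    have hm0 : m = 0 := Fdeg_eq_zero' (by omega)
    exact ⟨0, by rw [Amap_zero, hm0]⟩
  | succ n ih =>
    intro m hm
    rw [Nat.succ_mul] at hm
    obtain ⟨b, hbd, hble⟩ := exists_sub_part d m (by omega)
    have hb2 : ∑ i, b i = d := by
      rw [← hbd, Fdeg, Finsupp.sum_fintype]
      intro i; rfl
    set a : Vd s d := ⟨⇑b, hb2⟩ with ha
    have hbvec : bvec a = b := by
      rw [bvec]; exact Finsupp.equivFunOnFinite_symm_coe b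
    have hdeg : Fdeg (m - b) = n * d := by
      have := Fdeg_add' (m - b) b
      rw [tsub_add_cancel_of_le hble] at this
      omega
    obtain ⟨u', hu'⟩ := ih (m - b) hdeg
    refine ⟨Finsupp.single a 1 + u', ?_⟩
    rw [Amap_add, Amap_single, hu', one_smul, hbvec, add_comm]
    exact tsub_add_cancel_of_le hble

/-! ### `d = 0` helpers -/

lemma inWIdeal_of_const_weight {σ K : Type*} [Field K] {w : σ → ℕ}
    (hw : ∀ m, wdeg w m = 0) (J : Ideal (MvPolynomial σ K)) : inWIdeal w J = J := by
  rw [inWIdeal]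
  have hset : { g | ∃ f ∈ J, g = inW w f } = (J : Set (MvPolynomial σ K)) := by
    ext g
    simp only [Set.mem_setOf_eq, SetLike.mem_coe]
    constructor
    · rintro ⟨f, hf, rfl⟩
      rwa [inW_of_weight_eq (W := 0) (fun m _ => hw m)]
    · intro hg
      exact ⟨g, hg, (inW_of_weight_eq (W := 0) (fun m _ => hw m)).symm⟩
  rw [hset, Ideal.span_eq]

lemma phi_d0_const {K : Type*} [Field K] (s : ℕ) (p : MvPolynomial (Vd s 0) K) :
    phi K s 0 p = C (eval₂ (RingHom.id K) (fun _ => 1) p) := by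
  have hvars : (fun a : Vd s 0 => ∏ i, (X i : MvPolynomial (Fin s) K) ^ a.1 i)
      = fun _ => 1 := by
    funext a
    have h0 : ∀ i, a.1 i = 0 := fun i =>
      Finset.sum_eq_zero_iff.mp a.2 i (Finset.mem_univ i)
    simp [h0]
  rw [phi, aeval_def, hvars]
  rw [eval₂_comp_left C (RingHom.id K) (fun _ => 1) p]
  simp only [algebraMap_eq, RingHom.comp_id, Function.comp]
  congr 1

lemma inW_one {σ K : Type*} [Field K] (w : σ → ℕ) : inW w (1 : MvPolynomial σ K) = 1 := by
  apply inW_of_weight_eq (W := 0)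
  intro m hm
  have h1 : (1 : MvPolynomial σ K) = monomial 0 1 := by rw [monomial_zero', C_1]
  classical
  rw [h1] at hm
  rw [mem_support_iff, coeff_monomial] at hm
  have hm0 : m = 0 := by
    by_contra h
    rw [if_neg (fun hh : (0 : σ →₀ ℕ) = m => h hh.symm)] at hm
    exact hm rfl
  rw [hm0, wdeg_zero']

lemma inWIdeal_top {σ K : Type*} [Field K] (w : σ → ℕ) :
    inWIdeal w (⊤ : Ideal (MvPolynomial σ K)) = ⊤ := by
  rw [Ideal.eq_top_iff_one, inWIdeal]
  exact Ideal.subset_span ⟨1, trivial, (inW_one w).symm⟩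

lemma constantCoeff_inWIdeal {s : ℕ} {K : Type*} [Field K]
    {I : Ideal (MvPolynomial (Fin s) K)}
    (hhom : ∀ f ∈ I, ∀ n, MvPolynomial.homogeneousComponent n f ∈ I)
    (hI : I ≠ ⊤) (ω : Fin s → ℕ) {c : K} (hc : C c ∈ inWIdeal ω I) : c = 0 := by
  have hker : inWIdeal ω I ≤ RingHom.ker (constantCoeff (σ := Fin s) (R := K)) := by
    rw [inWIdeal, Ideal.span_le]
    rintro g ⟨f, hf, rfl⟩
    have hc0 : coeff 0 f = 0 := by
      by_contra hne
      have hmem : C (coeff 0 f) ∈ I := by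
        have := hhom f hf 0
        rwa [homogeneousComponent_zero] at this
      exact hI (Ideal.eq_top_of_isUnit_mem I hmem ((isUnit_iff_ne_zero.mpr hne).map C))
    simp only [SetLike.mem_coe, RingHom.mem_ker]
    rw [show (constantCoeff (inW ω f) : K) = coeff 0 (inW ω f) from congrFun constantCoeff_eq _]
    rw [coeff_inW]
    by_cases h : wdeg ω (0 : (Fin s) →₀ ℕ) = maxw ω f
    · rw [if_pos h, hc0]
    · rw [if_neg h]
  have := hker hc
  rwa [RingHom.mem_ker, constantCoeff_C] at this

open Classical in
lemma sum_sel_bideg {σ K : Type*} [Field K] (w : σ → ℕ) (x : MvPolynomial σ K) :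
    ∑ p ∈ x.support.image (fun m => (Fdeg m, wdeg w m)),
      sel (fun m => Fdeg m = p.1 ∧ wdeg w m = p.2) x = x := by
  ext m
  rw [coeff_sum]
  have hterm : ∀ p : ℕ × ℕ, coeff m (sel (fun m => Fdeg m = p.1 ∧ wdeg w m = p.2) x)
      = if p = (Fdeg m, wdeg w m) then coeff m x else 0 := by
    intro p
    rw [coeff_sel]
    by_cases h : p = (Fdeg m, wdeg w m)
    · rw [if_pos ⟨(congrArg Prod.fst h).symm, (congrArg Prod.snd h).symm⟩, if_pos h]
    · rw [if_neg h, if_neg (fun hc => h (Prod.ext hc.1.symm hc.2.symm))]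
  rw [Finset.sum_congr rfl fun p _ => hterm p, Finset.sum_ite_eq']
  by_cases hm : m ∈ x.support
  · rw [if_pos (Finset.mem_image_of_mem _ hm)]
  · rw [MvPolynomial.notMem_support_iff] at hm
    rw [hm, ite_self]

lemma part1 {K : Type*} [Field K] (s d : ℕ) (I : Ideal (MvPolynomial (Fin s) K))
    (ω : Fin s → ℕ) :
    inWIdeal (fun v : Vd s d => ∑ i, ω i * v.1 i)
        (Ideal.comap (phi K s d : MvPolynomial (Vd s d) K →+* MvPolynomial (Fin s) K) I)
      ≤ Ideal.comap (phi K s d : MvPolynomial (Vd s d) K →+* MvPolynomial (Fin s) K)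
          (inWIdeal ω I) := by
  set w := fun v : Vd s d => ∑ i, ω i * v.1 i with hw
  rw [inWIdeal, Ideal.span_le]
  rintro g ⟨f, hf, rfl⟩
  rw [Ideal.mem_comap] at hf
  rw [SetLike.mem_coe, Ideal.mem_comap]
  show phi K s d (inW w f) ∈ inWIdeal ω I
  set M := maxw w f with hM
  have hcomm : phi K s d (inW w f) = sel (fun m => wdeg ω m = M) (phi K s d f) := by
    rw [inW_eq_sel]
    exact phi_sel _ _ (fun u => by rw [wdeg_Amap]) f
  rw [hcomm]
  have hbound : ∀ m ∈ (phi K s d f).support, wdeg ω m ≤ M := by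
    intro m hm
    obtain ⟨u, hu, rfl⟩ := support_phi f m hm
    rw [wdeg_Amap]
    exact Finset.le_sup hu
  by_cases hex : ∃ m ∈ (phi K s d f).support, wdeg ω m = M
  · obtain ⟨m₀, hm₀, hm₀M⟩ := hex
    have hMq : maxw ω (phi K s d f) = M :=
      le_antisymm (Finset.sup_le hbound) (hm₀M ▸ Finset.le_sup hm₀)
    rw [show sel (fun m => wdeg ω m = M) (phi K s d f) = inW ω (phi K s d f) from by
      rw [inW_eq_sel, hMq]]
    exact Ideal.subset_span ⟨phi K s d f, hf, rfl⟩
  · push_neg at hex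
    have hzero : sel (fun m => wdeg ω m = M) (phi K s d f) = 0 := by
      ext m
      rw [coeff_sel, coeff_zero]
      by_cases hwm : wdeg ω m = M
      · rw [if_pos hwm]
        by_contra hc
        exact (hex m (mem_support_iff.mpr (fun h0 => hc h0))) hwm
      · rw [if_neg hwm]
    rw [hzero]
    exact Ideal.zero_mem _

lemma component_mem {K : Type*} [Field K] {s d : ℕ} (hd : 0 < d)
    {I : Ideal (MvPolynomial (Fin s) K)}
    (hhom : ∀ f ∈ I, ∀ n, MvPolynomial.homogeneousComponent n f ∈ I)
    {ω : Fin s → ℕ} {A : Set ((Fin s) →₀ ℕ)}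
    (hA : inWIdeal ω I = Ideal.span ((fun m => monomial m (1 : K)) '' A))
    (x : MvPolynomial (Vd s d) K) (hx : phi K s d x ∈ inWIdeal ω I) (n W : ℕ) :
    sel (fun m => Fdeg m = n ∧ wdeg (fun v : Vd s d => ∑ i, ω i * v.1 i) m = W) x
      ∈ inWIdeal (fun v : Vd s d => ∑ i, ω i * v.1 i)
          (Ideal.comap (phi K s d : MvPolynomial (Vd s d) K →+* MvPolynomial (Fin s) K) I) := by
  set w := fun v : Vd s d => ∑ i, ω i * v.1 i with hw
  set g := sel (fun m => Fdeg m = n ∧ wdeg w m = W) x with hg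
  by_cases hg0 : g = 0
  · rw [hg0]; exact Ideal.zero_mem _
  have hiff : ∀ u : Vd s d →₀ ℕ,
      (Fdeg u = n ∧ wdeg w u = W) ↔ (Fdeg (Amap u) = n * d ∧ wdeg ω (Amap u) = W) := by
    intro u
    rw [Fdeg_Amap, wdeg_Amap, ← hw]
    constructor
    · rintro ⟨h1, h2⟩; exact ⟨by rw [h1]; ring, h2⟩
    · rintro ⟨h1, h2⟩
      exact ⟨Nat.eq_of_mul_eq_mul_left hd (by rw [h1]; ring), h2⟩
  have hcomm : phi K s d g = sel (fun m => Fdeg m = n * d ∧ wdeg ω m = W) (phi K s d x) :=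
    phi_sel _ _ hiff x
  -- the support of `g`
  have hsupg : ∀ m ∈ g.support, Fdeg m = n ∧ wdeg w m = W := by
    intro m hm
    exact (support_sel hm).2
  -- the support of `phi g`
  have hsupq : ∀ m ∈ (phi K s d g).support, Fdeg m = n * d ∧ wdeg ω m = W := by
    intro m hm
    rw [hcomm] at hm
    exact (support_sel hm).2
  -- `phi g` belongs to the initial ideal
  have hq_mem : phi K s d g ∈ inWIdeal ω I := by
    rw [hA] at hx ⊢
    rw [mem_ideal_span_monomial_image] at hx ⊢
    intro m hm
    apply hx
    rw [hcomm] at hm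
    exact (support_sel hm).1
  by_cases hq : phi K s d g = 0
  · -- `g` is its own initial form and lies in the contraction
    refine Ideal.subset_span ⟨g, ?_, (inW_of_weight_eq (W := W) fun m hm => (hsupg m hm).2).symm⟩
    rw [Ideal.mem_comap]
    show phi K s d g ∈ I
    rw [hq]
    exact Ideal.zero_mem I
  · obtain ⟨f, hfI, hftop, hfeq⟩ := lemmaE ω I hq_mem W
    set f' := MvPolynomial.homogeneousComponent (n * d) f with hf'
    have hf'I : f' ∈ I := hhom f hfI (n * d)
    have hcoeff_f' : ∀ m, coeff m f' = if Fdeg m = n * d then coeff m f else 0 := by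
      intro m
      rw [hf', MvPolynomial.coeff_homogeneousComponent]
      have : m.degree = Fdeg m := rfl
      rw [this]
    set q := phi K s d g with hqdef
    set r := f' - q with hr
    have hrW : ∀ m, W ≤ wdeg ω m → coeff m r = 0 := by
      intro m hm
      rw [hr, coeff_sub, hcoeff_f']
      have hqz : W < wdeg ω m → coeff m q = 0 := by
        intro hlt
        by_contra hc
        have := (hsupq m (mem_support_iff.mpr hc)).2
        omega
      rcases Nat.lt_or_ge W (wdeg ω m) with hlt | hge
      · rw [hftop m hlt, hqz hlt, ite_self, sub_zero]
      · have heq : wdeg ω m = W := le_antisymm hge hm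
        by_cases hdm : Fdeg m = n * d
        · rw [if_pos hdm, hfeq m heq, sub_self]
        · rw [if_neg hdm]
          have hqz0 : coeff m q = 0 := by
            by_contra hc
            exact hdm (hsupq m (mem_support_iff.mpr hc)).1
          rw [hqz0, sub_zero]
    have hrdeg : ∀ m, coeff m r ≠ 0 → Fdeg m = n * d := by
      intro m hc
      by_contra hdm
      apply hc
      rw [hr, coeff_sub, hcoeff_f', if_neg hdm]
      have hqz0 : coeff m q = 0 := by
        by_contra hcq
        exact hdm (hsupq m (mem_support_iff.mpr hcq)).1
      rw [hqz0, sub_zero]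
    -- lift `r` along `phi`
    have hlift : ∀ m : Fin s →₀ ℕ, ∃ u : Vd s d →₀ ℕ, m ∈ r.support → Amap u = m := by
      intro m
      by_cases hm : m ∈ r.support
      · obtain ⟨u, hu⟩ := exists_lift n m (hrdeg m (mem_support_iff.mp hm))
        exact ⟨u, fun _ => hu⟩
      · exact ⟨0, fun h => absurd h hm⟩
    choose L hL using hlift
    set ψ : MvPolynomial (Vd s d) K := ∑ m ∈ r.support, monomial (L m) (coeff m r) with hψ
    have hφψ : phi K s d ψ = r := by
      rw [hψ, map_sum]
      rw [Finset.sum_congr rfl fun m hm => by rw [phi_monomial, hL m hm]]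
      exact support_sum_monomial_coeff r
    have hψw : ∀ u, coeff u ψ ≠ 0 → wdeg w u < W := by
      intro u hc
      rw [hψ, coeff_sum] at hc
      obtain ⟨m, hm, hne⟩ : ∃ m ∈ r.support, coeff u (monomial (L m) (coeff m r)) ≠ 0 := by
        by_contra hall
        push_neg at hall
        exact hc (Finset.sum_eq_zero hall)
      classical
      rw [coeff_monomial] at hne
      have hLu : L m = u := by
        by_contra hne'
        rw [if_neg hne'] at hne
        exact hne rfl
      have hwu : wdeg w u = wdeg ω m := by
        rw [← hLu, ← wdeg_Amap, hL m hm]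
      have : ¬ W ≤ wdeg ω m := fun hle => (mem_support_iff.mp hm) (hrW m hle)
      omega
    -- the element `g + ψ` of the contraction has initial form `g`
    have hgψmem : g + ψ ∈ Ideal.comap
        (phi K s d : MvPolynomial (Vd s d) K →+* MvPolynomial (Fin s) K) I := by
      rw [Ideal.mem_comap]
      show phi K s d (g + ψ) ∈ I
      rw [map_add, hφψ, hr, ← hqdef]
      have : q + (f' - q) = f' := by ring
      rw [this]
      exact hf'I
    refine Ideal.subset_span ⟨g + ψ, hgψmem, ?_⟩
    -- g = inW w (g + ψ)
    have hψW : ∀ m, wdeg w m = W → coeff m ψ = 0 := by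
      intro m hm
      by_contra hc
      have := hψw m hc
      omega
    have hbound : ∀ m ∈ (g + ψ).support, wdeg w m ≤ W := by
      intro m hm
      rw [mem_support_iff, coeff_add] at hm
      by_cases hgm : coeff m g = 0
      · have hψm : coeff m ψ ≠ 0 := fun h => hm (by rw [hgm, h, add_zero])
        exact le_of_lt (hψw m hψm)
      · exact le_of_eq (hsupg m (mem_support_iff.mpr hgm)).2
    have hmaxw : maxw w (g + ψ) = W := by
      obtain ⟨m₀, hm₀⟩ : ∃ m₀, m₀ ∈ g.support := by
        by_contra hc
        push_neg at hc
        exact hg0 (MvPolynomial.support_eq_empty.mp (Finset.eq_empty_iff_forall_notMem.mpr hc))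
      have hm₀W : wdeg w m₀ = W := (hsupg m₀ hm₀).2
      have hm₀c : coeff m₀ (g + ψ) ≠ 0 := by
        rw [coeff_add, hψW m₀ hm₀W, add_zero]
        exact mem_support_iff.mp hm₀
      exact le_antisymm (Finset.sup_le hbound)
        (hm₀W ▸ Finset.le_sup (mem_support_iff.mpr hm₀c))
    ext m
    rw [coeff_inW, hmaxw]
    by_cases hwm : wdeg w m = W
    · rw [if_pos hwm, coeff_add, hψW m hwm, add_zero]
    · rw [if_neg hwm]
      by_contra hc
      exact hwm (hsupg m (mem_support_iff.mpr hc)).2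

end Stmt15Aux

/-- `in_{φ_d*ω}(φ_d⁻¹(I)) = φ_d⁻¹(in_ω(I))`. -/
theorem stmt15 (K : Type*) [Field K] (s d : ℕ)
    (I : Ideal (MvPolynomial (Fin s) K))
    -- `I` is homogeneous
    (hhom : ∀ f ∈ I, ∀ n, MvPolynomial.homogeneousComponent n f ∈ I)
    (ω : Fin s → ℕ)
    -- `in_ω(I)` is a monomial ideal
    (hmono : ∃ A : Set ((Fin s) →₀ ℕ),
      inWIdeal ω I = Ideal.span ((fun m => monomial m (1 : K)) '' A)) :
    inWIdeal (fun v : Vd s d => ∑ i, ω i * v.1 i)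
        (Ideal.comap (phi K s d : MvPolynomial (Vd s d) K →+* MvPolynomial (Fin s) K) I)
      = Ideal.comap (phi K s d : MvPolynomial (Vd s d) K →+* MvPolynomial (Fin s) K)
          (inWIdeal ω I) := by
  obtain ⟨A, hA⟩ := hmono
  by_cases hd : d = 0
  · subst hd
    have hwzero : ∀ m : Vd s 0 →₀ ℕ, wdeg (fun v : Vd s 0 => ∑ i, ω i * v.1 i) m = 0 := by
      intro m
      rw [wdeg, Finsupp.sum]
      apply Finset.sum_eq_zero
      intro v _
      have h0 : ∀ i, v.1 i = 0 := fun i => Finset.sum_eq_zero_iff.mp v.2 i (Finset.mem_univ i)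
      have hv : (∑ i, ω i * v.1 i) = 0 := Finset.sum_eq_zero fun i _ => by rw [h0 i, mul_zero]
      rw [hv, zero_mul]
    rw [inWIdeal_of_const_weight hwzero]
    by_cases hI : I = ⊤
    · subst hI
      rw [inWIdeal_top]
    · ext p
      rw [Ideal.mem_comap, Ideal.mem_comap]
      have hp : (phi K s 0 : MvPolynomial (Vd s 0) K →+* MvPolynomial (Fin s) K) p
          = C (eval₂ (RingHom.id K) (fun _ => 1) p) := phi_d0_const s p
      rw [hp]
      constructor
      · intro h
        have hc : eval₂ (RingHom.id K) (fun _ => 1) p = 0 := by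
          by_contra hne
          exact hI (Ideal.eq_top_of_isUnit_mem I h ((isUnit_iff_ne_zero.mpr hne).map C))
        rw [hc, map_zero]
        exact Ideal.zero_mem _
      · intro h
        have hc : eval₂ (RingHom.id K) (fun _ => 1) p = 0 :=
          constantCoeff_inWIdeal hhom hI ω h
        rw [hc, map_zero]
        exact Ideal.zero_mem _
  · have hd' : 0 < d := Nat.pos_of_ne_zero hd
    apply le_antisymm
    · exact part1 s d I ω
    · intro x hx
      rw [Ideal.mem_comap] at hx
      have hxphi : phi K s d x ∈ inWIdeal ω I := hx
      rw [← sum_sel_bideg (fun v : Vd s d => ∑ i, ω i * v.1 i) x]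
      apply Ideal.sum_mem
      intro p _
      exact component_mem hd' hhom hA x hxphi p.1 p.2
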